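/- In the setting of composing Lagrangians (W₀, W₁, W₂ complex Hilbert spaces with real structures, L₀₁, L₁₂ Lagrangians), with W = W₀ ⊕ (−W₁) ⊕ W₁ ⊕ (−W₂), L = L₀₁ ⊕ L₁₂, U = {(0,w,w,0) : w ∈ W₁}, L_σ = ker(σ) ∩ L, and P_L the orthogonal projection onto L: the subspace P_L(Ū) is orthogonal to L_σ, and the closure of P_L(Ū) equals L_σ^⊥ ∩ L. -/

import Mathlib

/-!
A Lagrangian is the conjugate of an annihilator, hence closed, so `L = L₀₁ ⊕ L₁₂` is a closed
subspace of the Hilbert space `W`. For any subspace `U` of `W`, `(P_L U)^⊥ = P_L⁻¹(U^⊥)`, whose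
orthogonal complement is `L ∩ (L ∩ U^⊥)^⊥`; this is therefore the closure of `P_L U`. For
`U = Ū = im δ̄`, where `δ̄ = σ*`, we get `Ū^⊥ = ker σ` and so `L ∩ Ū^⊥ = L_σ`.
-/

noncomputable section

/-- A real structure on a complex inner product space: an anti-unitary involution `v ↦ v̄`. -/
structure RealStructure (W : Type*) [NormedAddCommGroup W] [InnerProductSpace ℂ W] where
  conj : W → W
  map_add : ∀ v w : W, conj (v + w) = conj v + conj w
  map_smul : ∀ (c : ℂ) (v : W), conj (c • v) = (starRingEnd ℂ) c • conj v
  invol : ∀ v : W, conj (conj v) = v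
  inner_conj : ∀ v w : W, (inner ℂ (conj v) (conj w) : ℂ) = (starRingEnd ℂ) (inner ℂ v w : ℂ)

/-- The real structure of `A ⊕ (−B)`. -/
def pairConj {A B : Type*} [NormedAddCommGroup A] [InnerProductSpace ℂ A]
    [NormedAddCommGroup B] [InnerProductSpace ℂ B]
    (rA : RealStructure A) (rB : RealStructure B) : A × B → A × B :=
  fun p => (rA.conj p.1, -rB.conj p.2)

/-- The Hermitian inner product of `A ⊕ B`. -/
def pairInner {A B : Type*} [NormedAddCommGroup A] [InnerProductSpace ℂ A]
    [NormedAddCommGroup B] [InnerProductSpace ℂ B] (x y : A × B) : ℂ :=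
  (inner ℂ x.1 y.1 : ℂ) + (inner ℂ x.2 y.2 : ℂ)

/-- A Lagrangian `L ⊆ A ⊕ (−B)`. -/
def IsLagrangianPair {A B : Type*} [NormedAddCommGroup A] [InnerProductSpace ℂ A]
    [NormedAddCommGroup B] [InnerProductSpace ℂ B]
    (rA : RealStructure A) (rB : RealStructure B) (L : Submodule ℂ (A × B)) : Prop :=
  pairConj rA rB '' (L : Set (A × B)) = {y : A × B | ∀ x ∈ L, pairInner x y = 0}

variable {W₀ W₁ W₂ : Type*}
  [NormedAddCommGroup W₀] [InnerProductSpace ℂ W₀] [CompleteSpace W₀]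
  [NormedAddCommGroup W₁] [InnerProductSpace ℂ W₁] [CompleteSpace W₁]
  [NormedAddCommGroup W₂] [InnerProductSpace ℂ W₂] [CompleteSpace W₂]

/-- The Hermitian inner product of `W = W₀ ⊕ (−W₁) ⊕ W₁ ⊕ (−W₂)`. -/
def innerE (x y : (W₀ × W₁) × (W₁ × W₂)) : ℂ :=
  pairInner x.1 y.1 + pairInner x.2 y.2

/-- The set of orthogonal projections onto the (closed) subspace `C` of elements of `S`. -/
def projSet (C S : Set ((W₀ × W₁) × (W₁ × W₂))) : Set ((W₀ × W₁) × (W₁ × W₂)) :=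
  {p | p ∈ C ∧ ∃ u ∈ S, ∀ x ∈ C, innerE (u - p) x = 0}

open scoped InnerProductSpace

namespace Submodule

variable {𝕜 E : Type*} [RCLike 𝕜] [NormedAddCommGroup E] [InnerProductSpace 𝕜 E]
  (K : Submodule 𝕜 E) [K.HasOrthogonalProjection]

theorem starProjection_image_eq (U : Set E) :
    K.starProjection '' U = {p | p ∈ K ∧ ∃ u ∈ U, ∀ x ∈ K, ⟪u - p, x⟫_𝕜 = 0} := by
  ext p
  constructor
  · rintro ⟨u, hu, rfl⟩
    exact ⟨K.starProjection_apply_mem u, u, hu, fun x hx => K.starProjection_inner_eq_zero u x hx⟩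
  · rintro ⟨hp, u, hu, hperp⟩
    exact ⟨u, hu, K.eq_starProjection_of_mem_of_inner_eq_zero hp hperp⟩

theorem orthogonal_comap_starProjection (N : Submodule 𝕜 E) :
    (N.comap (K.starProjection : E →ₗ[𝕜] E))ᗮ = K ⊓ (K ⊓ N)ᗮ := by
  refine le_antisymm (le_inf ?_ (orthogonal_le fun y hy => ?_)) ?_
  · refine (orthogonal_le fun y hy => ?_).trans K.orthogonal_orthogonal.le
    simp [K.starProjection_apply_eq_zero_iff.mpr hy]
  · simpa [starProjection_eq_self_iff.mpr hy.1] using hy.2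
  · rintro x ⟨hxK, hx⟩ y hy
    rw [← starProjection_eq_self_iff.mpr hxK, ← inner_starProjection_left_eq_right]
    exact hx _ ⟨K.starProjection_apply_mem y, hy⟩

theorem orthogonal_map_starProjection (U : Submodule 𝕜 E) :
    (U.map (K.starProjection : E →ₗ[𝕜] E))ᗮ = Uᗮ.comap (K.starProjection : E →ₗ[𝕜] E) := by
  ext y
  simp [mem_orthogonal, inner_starProjection_left_eq_right]

theorem topologicalClosure_map_starProjection [CompleteSpace E] (U : Submodule 𝕜 E) :
    (U.map (K.starProjection : E →ₗ[𝕜] E)).topologicalClosure = K ⊓ (K ⊓ Uᗮ)ᗮ := by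
  rw [← orthogonal_orthogonal_eq_closure, orthogonal_map_starProjection,
    orthogonal_comap_starProjection]

end Submodule

namespace RealStructure

variable {W : Type*} [NormedAddCommGroup W] [InnerProductSpace ℂ W] (r : RealStructure W)

theorem norm_conj (v : W) : ‖r.conj v‖ = ‖v‖ := by
  refine (pow_left_inj₀ (norm_nonneg _) (norm_nonneg _) two_ne_zero).mp ?_
  rw [← inner_self_eq_norm_sq (𝕜 := ℂ), ← inner_self_eq_norm_sq (𝕜 := ℂ), r.inner_conj,
    RCLike.conj_re]

def toLinearIsometryEquiv : W ≃ₗᵢ⋆[ℂ] W where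
  toFun := r.conj
  invFun := r.conj
  map_add' := r.map_add
  map_smul' := r.map_smul
  left_inv := r.invol
  right_inv := r.invol
  norm_map' := r.norm_conj

theorem continuous_conj : Continuous r.conj :=
  r.toLinearIsometryEquiv.continuous

theorem conj_neg (v : W) : r.conj (-v) = -r.conj v :=
  map_neg r.toLinearIsometryEquiv v

theorem conj_surjective : Function.Surjective r.conj :=
  r.toLinearIsometryEquiv.surjective

end RealStructure

section Lagrangian

variable {A B : Type*} [NormedAddCommGroup A] [InnerProductSpace ℂ A]
  [NormedAddCommGroup B] [InnerProductSpace ℂ B]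

theorem pairConj_involutive (rA : RealStructure A) (rB : RealStructure B) :
    Function.Involutive (pairConj rA rB) := fun p => by
  simp [pairConj, rA.invol, rB.conj_neg, rB.invol]

theorem continuous_pairConj (rA : RealStructure A) (rB : RealStructure B) :
    Continuous (pairConj rA rB) :=
  (rA.continuous_conj.comp continuous_fst).prodMk (rB.continuous_conj.comp continuous_snd).neg

theorem isClosed_setOf_forall_pairInner_eq_zero (L : Set (A × B)) :
    IsClosed {y : A × B | ∀ x ∈ L, pairInner x y = 0} := by
  simp only [Set.ofPred_forall]
  exact isClosed_iInter fun x => isClosed_iInter fun _ => isClosed_eq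
    ((continuous_const.inner continuous_fst).add (continuous_const.inner continuous_snd))
    continuous_const

theorem IsLagrangianPair.isClosed {rA : RealStructure A} {rB : RealStructure B}
    {L : Submodule ℂ (A × B)} (h : IsLagrangianPair rA rB L) : IsClosed (L : Set (A × B)) := by
  unfold IsLagrangianPair at h
  rw [← (pairConj_involutive rA rB).injective.preimage_image (L : Set (A × B)), h]
  exact (isClosed_setOf_forall_pairInner_eq_zero (L : Set (A × B))).preimage
    (continuous_pairConj rA rB)

end Lagrangian

local notation "𝕍" => (W₀ × W₁) × (W₁ × W₂)
local notation "𝕎" => WithLp 2 (WithLp 2 (W₀ × W₁) × WithLp 2 (W₁ × W₂))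

/- `𝕍` carries the sup norm; `innerE` is the inner product of its `L²` model `𝕎`, which has the
same topology. -/
variable (W₀ W₁ W₂) in
def toL2 : 𝕍 ≃L[ℂ] 𝕎 :=
  ((WithLp.prodContinuousLinearEquiv 2 ℂ W₀ W₁).symm.prodCongr
    (WithLp.prodContinuousLinearEquiv 2 ℂ W₁ W₂).symm).trans
    (WithLp.prodContinuousLinearEquiv 2 ℂ _ _).symm

local notation "τ" => toL2 W₀ W₁ W₂

def deltaBar : W₁ →ₗ[ℂ] 𝕍 where
  toFun v := ((0, -v), (v, 0))
  map_add' v w := by simp [add_comm]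
  map_smul' c v := by simp

section Transport

omit [CompleteSpace W₀] [CompleteSpace W₁] [CompleteSpace W₂]

theorem innerE_eq_inner (x y : 𝕍) : innerE x y = ⟪τ x, τ y⟫_ℂ := by
  simp [innerE, pairInner, toL2, WithLp.prod_inner_apply]

theorem toL2_preimage_map (N : Submodule ℂ 𝕍) : τ ⁻¹' (N.map (τ : 𝕍 →ₗ[ℂ] 𝕎)) = N := by
  ext x
  simp

theorem projSet_toL2_preimage (C S : Set 𝕎) :
    projSet (τ ⁻¹' C) (τ ⁻¹' S) =
      τ ⁻¹' {p | p ∈ C ∧ ∃ u ∈ S, ∀ x ∈ C, ⟪u - p, x⟫_ℂ = 0} := by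
  ext p
  simp [projSet, innerE_eq_inner, (τ).surjective.forall, (τ).surjective.exists]

theorem toL2_preimage_orthogonal (M : Submodule ℂ 𝕎) :
    τ ⁻¹' (Mᗮ : Set 𝕎) = {x | ∀ q ∈ τ ⁻¹' M, innerE x q = 0} := by
  ext x
  simp [Submodule.mem_orthogonal', innerE_eq_inner, (τ).surjective.forall]

theorem innerE_deltaBar (x : 𝕍) (v : W₁) : innerE x (deltaBar v) = ⟪x.2.1 - x.1.2, v⟫_ℂ := by
  simp only [innerE, pairInner, deltaBar, LinearMap.coe_mk, AddHom.coe_mk, inner_zero_right,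
    inner_neg_right, zero_add, add_zero, inner_sub_left]
  ring

theorem toL2_preimage_orthogonal_map_range_deltaBar :
    τ ⁻¹' ((LinearMap.range deltaBar).map (τ : 𝕍 →ₗ[ℂ] 𝕎))ᗮ = {x : 𝕍 | x.1.2 = x.2.1} := by
  ext x
  rw [toL2_preimage_orthogonal, toL2_preimage_map]
  simp only [Set.mem_ofPred_eq, SetLike.mem_coe, LinearMap.mem_range, forall_exists_index,
    forall_apply_eq_imp_iff, innerE_deltaBar]
  refine ⟨fun h => (sub_eq_zero.mp (inner_self_eq_zero.mp (h _))).symm, fun h v => ?_⟩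
  rw [h, sub_self, inner_zero_left]

theorem range_deltaBar_eq_setOf_conj (r : RealStructure W₁) :
    Set.range deltaBar = {x : 𝕍 | ∃ w, x = ((0, -r.conj w), (r.conj w, 0))} := by
  ext x
  constructor
  · rintro ⟨v, rfl⟩
    obtain ⟨w, rfl⟩ := r.conj_surjective v
    exact ⟨w, rfl⟩
  · rintro ⟨w, rfl⟩
    exact ⟨r.conj w, rfl⟩

end Transport

/-- With `L = L₀₁ ⊕ L₁₂`, `U = {(0,w,w,0)}`, `Ū` its conjugate and
`L_σ = ker σ ∩ L`: the set `P_L(Ū)` is orthogonal to `L_σ`, and its closure equals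
`L_σ^⊥ ∩ L`. -/
theorem projection_dense_in_Lsigma_perp
    (r₀ : RealStructure W₀) (r₁ : RealStructure W₁) (r₂ : RealStructure W₂)
    (L01 : Submodule ℂ (W₀ × W₁)) (L12 : Submodule ℂ (W₁ × W₂))
    (h01 : IsLagrangianPair r₀ r₁ L01) (h12 : IsLagrangianPair r₁ r₂ L12) :
    -- L = L₀₁ ⊕ L₁₂ ⊆ W, L_σ = ker σ ∩ L, Ū = conjugate of U = {(0,w,w,0) : w ∈ W₁}
    let L : Set ((W₀ × W₁) × (W₁ × W₂)) := (L01.prod L12 : Set ((W₀ × W₁) × (W₁ × W₂)))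
    let Lσ : Set ((W₀ × W₁) × (W₁ × W₂)) := {x ∈ L | x.1.2 = x.2.1}
    let Ubar : Set ((W₀ × W₁) × (W₁ × W₂)) :=
      {x | ∃ w : W₁, x = ((0, -r₁.conj w), (r₁.conj w, 0))}
    (∀ p ∈ projSet L Ubar, ∀ q ∈ Lσ, innerE p q = 0) ∧
    closure (projSet L Ubar) = {x | x ∈ L ∧ ∀ q ∈ Lσ, innerE x q = 0} := by
  intro L Lσ Ubar
  set K := (L01.prod L12).map (τ : 𝕍 →ₗ[ℂ] 𝕎)
  set U := (LinearMap.range deltaBar).map (τ : 𝕍 →ₗ[ℂ] 𝕎)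
  have hK : τ ⁻¹' K = L := toL2_preimage_map _
  have hU : τ ⁻¹' U = Ubar := by
    rw [toL2_preimage_map, LinearMap.coe_range, range_deltaBar_eq_setOf_conj r₁]
  have hLσ : τ ⁻¹' (K ⊓ Uᗮ : Submodule ℂ 𝕎) = Lσ := by
    rw [Submodule.coe_inf, Set.preimage_inter, hK, toL2_preimage_orthogonal_map_range_deltaBar]
    rfl
  have hKclosed : IsClosed (K : Set 𝕎) := by
    rw [Submodule.map_coe]
    exact (τ).toHomeomorph.isClosed_image.mpr (h01.isClosed.prod h12.isClosed)
  have : CompleteSpace K := hKclosed.completeSpace_coe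
  have hproj : projSet L Ubar = τ ⁻¹' (U.map (K.starProjection : 𝕎 →ₗ[ℂ] 𝕎)) := by
    rw [← hK, ← hU, projSet_toL2_preimage]
    exact congrArg _ (K.starProjection_image_eq U).symm
  have hclosure : closure (projSet L Ubar) = {x | x ∈ L ∧ ∀ q ∈ Lσ, innerE x q = 0} := by
    rw [hproj, ← (τ).preimage_closure,
      ← Submodule.topologicalClosure_coe, K.topologicalClosure_map_starProjection,
      Submodule.coe_inf, Set.preimage_inter, toL2_preimage_orthogonal, hLσ, hK]
    rfl
  exact ⟨fun p hp q hq => (hclosure ▸ subset_closure hp).2 q hq, hclosure⟩
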